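/- Let E be a fractional Brauer configuration and p a standard sequence of E. Then [^[p^∧]] = [[^p]^∧], where ^(-) and (-)^∧ denote left and right complements and [𝒳] the closure under the identity relation ≡. -/

import Mathlib

/-- A fractional Brauer configuration `E = (E, P, L, d)`:
a `G`-set `E` for `G = ⟨g⟩` infinite cyclic (encoded by the permutation `g`,
so that `g ^ n` for `n : ℤ` gives the `G`-action), two partitions `P` and `L`
of `E` (encoded by the class maps `e ↦ P e`, `e ↦ L e`), and a degree function
`d : E → ℤ₊`, subject to conditions (f1)–(f6). -/
structure FracBrauerConfig (E : Type*) where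
  g : Equiv.Perm E
  P : E → Set E
  L : E → Set E
  d : E → ℕ
  d_pos : ∀ e, 0 < d e
  mem_P : ∀ e, e ∈ P e
  P_class : ∀ e₁ e₂, e₂ ∈ P e₁ → P e₁ = P e₂
  mem_L : ∀ e, e ∈ L e
  L_class : ∀ e₁ e₂, e₂ ∈ L e₁ → L e₁ = L e₂
  /-- (f1) `L(e) ⊆ P(e)` -/
  L_subset_P : ∀ e, L e ⊆ P e
  /-- (f1) each polygon is finite -/
  P_finite : ∀ e, (P e).Finite
  /-- (f2) -/
  f2 : ∀ e₁ e₂, L e₁ = L e₂ → P (g e₁) = P (g e₂)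
  /-- (f3) `d` is constant on `⟨g⟩`-orbits -/
  f3 : ∀ (e : E) (n : ℤ), d ((g ^ n) e) = d e
  /-- (f4) -/
  f4 : ∀ e₁ e₂, P e₁ = P e₂ ↔ P ((g ^ (d e₁ : ℤ)) e₁) = P ((g ^ (d e₂ : ℤ)) e₂)
  /-- (f5) -/
  f5 : ∀ e₁ e₂, L e₁ = L e₂ ↔ L ((g ^ (d e₁ : ℤ)) e₁) = L ((g ^ (d e₂ : ℤ)) e₂)
  /-- (f6) no full formal word is a proper right-aligned subword of another -/
  f6 : ∀ e h, (∀ i : ℕ, i < d e → L ((g ^ (i : ℤ)) e) = L ((g ^ (i : ℤ)) h)) → ¬ d e < d h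

namespace FracBrauerConfig

variable {E : Type*} (C : FracBrauerConfig E)

/-- The Nakayama map `σ(e) = g^{d(e)}·e`. -/
def sigma (e : E) : E := (C.g ^ (C.d e : ℤ)) e

/-- A standard sequence `(g^{n-1}·e, …, g·e, e)` is encoded by its base angle `e`
and its length `n`, with `0 ≤ n ≤ d(e)`. -/
abbrev StdSeq := {p : E × ℕ // p.2 ≤ C.d p.1}

/-- The associated formal sequence `L(p)` of a standard sequence: the source polygon
(accounting for the trivial-sequence label `1_{P(e)}`) together with the list of
`L`-classes `L(e), L(g·e), …, L(g^{n-1}·e)`. Two standard sequences are identical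
(`p ≡ q`) exactly when their labels agree. -/
def lab (p : C.StdSeq) : Set E × List (Set E) :=
  (C.P p.1.1, (List.range p.1.2).map fun i => C.L ((C.g ^ (i : ℤ)) p.1.1))

/-- The left complement `^p` of a standard sequence `p`. -/
def lcomp (p : C.StdSeq) : C.StdSeq :=
  ⟨((C.g ^ (p.1.2 : ℤ)) p.1.1, C.d p.1.1 - p.1.2), by rw [C.f3]; exact Nat.sub_le _ _⟩

/-- The right complement `p^∧` of a standard sequence `p`. -/
def rcomp (p : C.StdSeq) : C.StdSeq :=
  ⟨((C.g ^ ((p.1.2 : ℤ) - (C.d p.1.1 : ℤ))) p.1.1, C.d p.1.1 - p.1.2), by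
    rw [C.f3]; exact Nat.sub_le _ _⟩

/-- A standard sequence is full when its length is `d(e)`. -/
def IsFull (p : C.StdSeq) : Prop := p.1.2 = C.d p.1.1

/-- Composition `q·p` of standard sequences (`p` first, then `q`), defined when the
source of `q` is the terminal `g^{len p}·(base p)` of `p` and the total length stays
within the degree bound. -/
def comp (p q : C.StdSeq) (_h1 : q.1.1 = (C.g ^ (p.1.2 : ℤ)) p.1.1)
    (h2 : p.1.2 + q.1.2 ≤ C.d p.1.1) : C.StdSeq := ⟨(p.1.1, p.1.2 + q.1.2), h2⟩

/-- Closure `[𝒳]` of a set of standard sequences under the identity relation `≡`. -/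
def cl (X : Set C.StdSeq) : Set C.StdSeq := {q | ∃ p ∈ X, C.lab q = C.lab p}

/-- The set `[[^p]^∧]`. -/
def f7set (p : C.StdSeq) : Set C.StdSeq := C.cl (C.rcomp '' C.cl {C.lcomp p})

/-- Condition (f7): `E` is of type S. -/
def TypeS : Prop := ∀ p q : C.StdSeq, C.lab p = C.lab q → C.f7set p = C.f7set q

/-- The relation `R` on the set `𝓔` of formal sequences of standard sequences:
`u R v` iff `u = L(p)`, `v = L(q)` for standard sequences `p, q` with `^p ≡ ^q`. -/
def Rrel (u v : Set E × List (Set E)) : Prop :=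
  ∃ p q : C.StdSeq, u = C.lab p ∧ v = C.lab q ∧ C.lab (C.lcomp p) = C.lab (C.lcomp q)

end FracBrauerConfig

/-! Applying `^` twice moves the base angle of a standard sequence by the Nakayama map `σ`
and keeps its length; by (f4) and (f5) this shift both preserves and reflects `≡`. Since `^` and
`(-)^∧` are mutually inverse, `q ↦ ^^q` maps `[p^∧]` onto `[^p]` with `^q = (^^q)^∧`, so already
`^[p^∧] = [^p]^∧` before the outer closure is taken. -/

theorem Equiv.Perm.zpow_apply_zpow_apply {α : Type*} (σ : Equiv.Perm α) (x y : ℤ) (a : α) :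
    (σ ^ x) ((σ ^ y) a) = (σ ^ (x + y)) a := by
  rw [zpow_add, Equiv.Perm.mul_apply]

namespace FracBrauerConfig

variable {E : Type*} (C : FracBrauerConfig E)

/- In `lab` the index `i` is elaborated in `ℤ`, so the list runs over the cast of
`List.range`; this lemma reads it back over `ℕ`. -/
lemma lab_eq_lab_iff {q r : C.StdSeq} :
    C.lab q = C.lab r ↔ C.P q.1.1 = C.P r.1.1 ∧ q.1.2 = r.1.2 ∧
      ∀ i < q.1.2, C.L ((C.g ^ (i : ℤ)) q.1.1) = C.L ((C.g ^ (i : ℤ)) r.1.1) := by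
  obtain ⟨⟨a, m⟩, _⟩ := q
  obtain ⟨⟨b, k⟩, _⟩ := r
  simp only [lab, Prod.mk.injEq, List.bind_eq_flatMap, List.pure_def, ← List.map_eq_flatMap,
    List.map_map]
  refine and_congr_right fun _ => ⟨fun h => ?_, ?_⟩
  · obtain rfl : m = k := by simpa using congrArg List.length h
    exact ⟨rfl, fun i hi => List.map_inj_left.mp h i (List.mem_range.mpr hi)⟩
  · rintro ⟨rfl, h⟩
    exact List.map_inj_left.mpr fun i hi => h i (List.mem_range.mp hi)

@[simp]
lemma rcomp_lcomp (q : C.StdSeq) : C.rcomp (C.lcomp q) = q := by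
  obtain ⟨⟨a, m⟩, hm : m ≤ C.d a⟩ := q
  ext
  · simp only [rcomp, lcomp, C.f3, Equiv.Perm.zpow_apply_zpow_apply]
    rw [show ((C.d a - m : ℕ) : ℤ) - C.d a + m = 0 by omega, zpow_zero, Equiv.Perm.one_apply]
  · simp only [rcomp, lcomp, C.f3]; omega

@[simp]
lemma lcomp_rcomp (q : C.StdSeq) : C.lcomp (C.rcomp q) = q := by
  obtain ⟨⟨a, m⟩, hm : m ≤ C.d a⟩ := q
  ext
  · simp only [rcomp, lcomp, C.f3, Equiv.Perm.zpow_apply_zpow_apply]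
    rw [show ((C.d a - m : ℕ) : ℤ) + (m - C.d a) = 0 by omega, zpow_zero, Equiv.Perm.one_apply]
  · simp only [rcomp, lcomp, C.f3]; omega

lemma lcomp_lcomp (q : C.StdSeq) :
    C.lcomp (C.lcomp q) = ⟨(C.sigma q.1.1, q.1.2), by rw [sigma, C.f3]; exact q.2⟩ := by
  obtain ⟨⟨a, m⟩, hm : m ≤ C.d a⟩ := q
  ext
  · simp only [lcomp, sigma, C.f3, Equiv.Perm.zpow_apply_zpow_apply]
    congr 2; omega
  · simp only [lcomp, C.f3]; omega

lemma lab_lcomp_lcomp_eq_iff {q r : C.StdSeq} :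
    C.lab (C.lcomp (C.lcomp q)) = C.lab (C.lcomp (C.lcomp r)) ↔ C.lab q = C.lab r := by
  simp only [lcomp_lcomp, lab_eq_lab_iff, sigma, ← C.f4]
  refine and_congr_right fun _ => and_congr_right fun _ => forall₂_congr fun i _ => ?_
  rw [C.f5 ((C.g ^ (i : ℤ)) q.1.1), C.f3, C.f3]
  simp only [Equiv.Perm.zpow_apply_zpow_apply, add_comm]

lemma lcomp_image_cl_rcomp (p : C.StdSeq) :
    C.lcomp '' C.cl {C.rcomp p} = C.rcomp '' C.cl {C.lcomp p} := by
  ext s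
  simp only [cl, Set.mem_singleton_iff, exists_eq_left, Set.mem_image, Set.mem_ofPred_eq]
  constructor
  · rintro ⟨q, hq, rfl⟩
    refine ⟨C.lcomp (C.lcomp q), ?_, C.rcomp_lcomp _⟩
    simpa using C.lab_lcomp_lcomp_eq_iff.mpr hq
  · rintro ⟨r, hr, rfl⟩
    exact ⟨C.rcomp (C.rcomp r), C.lab_lcomp_lcomp_eq_iff.mp (by simpa using hr), C.lcomp_rcomp _⟩

end FracBrauerConfig

/-- for any standard sequence `p`, `[^[p^∧]] = [[^p]^∧]`. -/
theorem stmt12 {E : Type*} (C : FracBrauerConfig E) (p : C.StdSeq) :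
    C.cl (C.lcomp '' C.cl {C.rcomp p}) = C.cl (C.rcomp '' C.cl {C.lcomp p}) := by
  rw [C.lcomp_image_cl_rcomp]
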